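/- Suppose p ∈ [1,∞), Q : D → [0,∞) is continuous, and γ > 0, δ ≥ 0 are constants such that for every ξ ∈ D, all continuous inputs u, w : [0,∞) → D, and every solution x of the single-component system with inputs u, w and x(0) = ξ, one has ‖h∘x‖_{[0,t],p} ≤ γ‖h∘u‖_{[0,t],p} + δ‖h∘w‖_{[0,t],p} + Q(ξ) for all t ≥ 0. Define θ := γ + δ if δ < γ and θ := 2√(γδ) if δ ≥ γ, and assume θ < 1. Then for every n ∈ ℕ, every continuous input u : [0,∞) → D, every ξ = (ξ_1,…,ξ_n) ∈ D^n, and every solution (x_1,…,x_n) of the string (Σ_n) with input u, with w ≡ 0, and with initial condition ξ, the estimate ‖h∘x_i‖_{[0,t],p} ≤ (γ/(1−θ))‖h∘u‖_{[0,t],p} + (max(1, (δ/γ)^{(n−1)/2})/(1−θ))·max_{j=1,…,n} Q(ξ_j) holds for all t ≥ 0 and all i = 1,…,n. -/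

import Mathlib

/-! The numbers `a j = ‖h ∘ x j‖_{[0,t],p}` satisfy `a j ≤ γ a (j-1) + δ a (j+1) + max Q`, with
`a 0 = ‖h ∘ u‖_{[0,t],p}` and `a (n+1) = 0`: feed the single-component estimate with the two
neighbours of `x j` as inputs. At a maximiser of `a` on `1..n` this gives a maximum principle
whenever `γ + δ < 1`. When `δ ≥ γ`, apply it instead to the weighted sequence `s ^ j a j` with
`s = √(δ/γ)`, whose gains `γ s` and `δ / s` both equal `√(γδ)`; undoing the weight costs the factor
`s ^ (n-1) = (δ/γ) ^ ((n-1)/2)` on the initial-condition term. -/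

/-- The `L^p` norm of a signal `y` on the interval `[0, t]`:
`‖y‖_{[0,t],p} = (∫_0^t |y(s)|^p ds)^{1/p}`. -/
noncomputable def lpNorm {m : ℕ} (p : ℝ) (y : ℝ → EuclideanSpace ℝ (Fin m)) (t : ℝ) : ℝ :=
  (∫ s in (0:ℝ)..t, ‖y s‖ ^ p) ^ (1 / p)

theorem lpNorm_nonneg {m : ℕ} {p : ℝ} {y : ℝ → EuclideanSpace ℝ (Fin m)} {t : ℝ} (ht : 0 ≤ t) :
    0 ≤ lpNorm p y t :=
  Real.rpow_nonneg (intervalIntegral.integral_nonneg ht fun _ _ => by positivity) _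

theorem lpNorm_zero {m : ℕ} {p : ℝ} (hp : p ≠ 0) (t : ℝ) :
    lpNorm p (fun _ => (0 : EuclideanSpace ℝ (Fin m))) t = 0 := by
  simp [lpNorm, Real.zero_rpow hp, Real.zero_rpow (inv_ne_zero hp)]

namespace StringRecurrence

variable {n : ℕ} {a : ℕ → ℝ} {U P α β : ℝ}

theorem discrete_max_principle (hU : 0 ≤ U) (hα : 0 ≤ α) (hβ : 0 ≤ β) (hαβ : α + β < 1)
    (ha : ∀ j, 0 ≤ a j) (ha0 : a 0 ≤ U) (hlast : a (n + 1) = 0)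
    (hrec : ∀ j ∈ Finset.Icc 1 n, a j ≤ α * a (j - 1) + β * a (j + 1) + P)
    {i : ℕ} (hi : i ∈ Finset.Icc 1 n) :
    a i ≤ (α * U + P) / (1 - (α + β)) := by
  obtain ⟨i₀, hi₀, hmax⟩ := (Finset.Icc 1 n).exists_max_image a ⟨i, hi⟩
  obtain ⟨hi₀1, hi₀n⟩ := Finset.mem_Icc.mp hi₀
  have hprev : a (i₀ - 1) ≤ max U (a i₀) := by
    rcases eq_or_ne i₀ 1 with rfl | hne
    · exact ha0.trans (le_max_left _ _)
    · exact (hmax _ (Finset.mem_Icc.mpr ⟨by omega, by omega⟩)).trans (le_max_right _ _)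
  have hnext : a (i₀ + 1) ≤ a i₀ := by
    rcases eq_or_ne i₀ n with rfl | hne
    · exact hlast ▸ ha i₀
    · exact hmax _ (Finset.mem_Icc.mpr ⟨by omega, by omega⟩)
  have hkey : a i₀ ≤ α * max U (a i₀) + β * a i₀ + P :=
    (hrec i₀ hi₀).trans (by gcongr)
  rw [le_div_iff₀ (by linarith)]
  have hmax_nonneg := ha i₀
  rcases le_total U (a i₀) with hc | hc
  · rw [max_eq_right hc] at hkey
    nlinarith [hmax i hi, mul_nonneg hα hU]
  · rw [max_eq_left hc] at hkey
    nlinarith [hmax i hi]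

/-- The weight `s ^ j` trades gain `β` on the right neighbour for gain on the left one. -/
theorem discrete_max_principle_weighted {s : ℝ} (hs : 1 ≤ s) (hU : 0 ≤ U) (hP : 0 ≤ P)
    (hα : 0 ≤ α) (hβ : 0 ≤ β) (hαβ : α * s + β / s < 1)
    (ha : ∀ j, 0 ≤ a j) (ha0 : a 0 ≤ U) (hlast : a (n + 1) = 0)
    (hrec : ∀ j ∈ Finset.Icc 1 n, a j ≤ α * a (j - 1) + β * a (j + 1) + P)
    {i : ℕ} (hi : i ∈ Finset.Icc 1 n) :
    a i ≤ (α * U + s ^ (n - 1) * P) / (1 - (α * s + β / s)) := by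
  have hs0 : 0 < s := by linarith
  set b : ℕ → ℝ := fun j => s ^ j * a j with hb
  have hbrec : ∀ j ∈ Finset.Icc 1 n,
      b j ≤ (α * s) * b (j - 1) + (β / s) * b (j + 1) + s ^ n * P := by
    intro j hj
    obtain ⟨j, rfl⟩ : ∃ j', j = j' + 1 := ⟨j - 1, by grind⟩
    have hpow : s ^ (j + 1) * P ≤ s ^ n * P :=
      mul_le_mul_of_nonneg_right (pow_le_pow_right₀ hs (Finset.mem_Icc.mp hj).2) hP
    calc b (j + 1) ≤ s ^ (j + 1) * (α * a j + β * a (j + 2) + P) :=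
          mul_le_mul_of_nonneg_left (hrec _ hj) (by positivity)
      _ = (α * s) * b j + (β / s) * b (j + 2) + s ^ (j + 1) * P := by
          simp only [hb]; field_simp; ring
      _ ≤ _ := by simp only [Nat.add_sub_cancel]; linarith
  have hbi := discrete_max_principle (a := b) hU (by positivity) (by positivity) hαβ
    (fun j => mul_nonneg (by positivity) (ha j)) (by simpa [hb] using ha0) (by simp [hb, hlast])
    hbrec hi
  obtain ⟨n, rfl⟩ : ∃ n', n = n' + 1 := ⟨n - 1, by grind⟩
  have hsi : s * a i ≤ b i :=
    mul_le_mul_of_nonneg_right (by simpa using pow_le_pow_right₀ hs (Finset.mem_Icc.mp hi).1) (ha i)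
  refine le_of_mul_le_mul_left ?_ hs0
  calc s * a i ≤ (α * s * U + s ^ (n + 1) * P) / (1 - (α * s + β / s)) := hsi.trans hbi
    _ = s * ((α * U + s ^ (n + 1 - 1) * P) / (1 - (α * s + β / s))) := by
      rw [Nat.add_sub_cancel, pow_succ]; ring

/-- `θ` is the minimum of `γ s + δ / s` over `s ≥ 1`, attained at `s = max 1 √(δ / γ)`. -/
theorem exists_weight_of_gains {γ δ : ℝ} (hγ : 0 < γ) (hδ : 0 ≤ δ) (n : ℕ) :
    ∃ s : ℝ, 1 ≤ s ∧ γ * s + δ / s = (if δ < γ then γ + δ else 2 * √(γ * δ)) ∧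
      s ^ (n - 1) ≤ max 1 ((δ / γ) ^ (((n : ℝ) - 1) / 2)) := by
  by_cases hδγ : δ < γ
  · exact ⟨1, le_rfl, by simp [hδγ], by simp⟩
  have hδγ : γ ≤ δ := not_lt.mp hδγ
  have hδ0 : 0 < δ := hγ.trans_le hδγ
  refine ⟨√(δ / γ), Real.one_le_sqrt.mpr ((one_le_div hγ).mpr hδγ), ?_, ?_⟩
  · have hsγ : γ * √(δ / γ) = √(γ * δ) := by
      rw [show γ * δ = γ ^ 2 * (δ / γ) by field_simp, Real.sqrt_mul' _ (by positivity),
        Real.sqrt_sq hγ.le]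
    have hsδ : δ / √(δ / γ) = √(γ * δ) := by
      rw [div_eq_iff (by positivity), ← Real.sqrt_mul (by positivity),
        show γ * δ * (δ / γ) = δ ^ 2 by field_simp, Real.sqrt_sq hδ]
    rw [if_neg (not_lt.mpr hδγ), hsγ, hsδ]; ring
  · rcases n with _ | n
    · simp
    refine le_max_of_le_right (le_of_eq ?_)
    rw [Real.sqrt_eq_rpow, ← Real.rpow_natCast, ← Real.rpow_mul (by positivity)]
    congr 1; push_cast; ring

theorem le_of_string_recurrence {γ δ θ : ℝ} (hγ : 0 < γ) (hδ : 0 ≤ δ)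
    (hθdef : θ = if δ < γ then γ + δ else 2 * √(γ * δ)) (hθ : θ < 1) (hU : 0 ≤ U) (hP : 0 ≤ P)
    (ha : ∀ j, 0 ≤ a j) (ha0 : a 0 ≤ U) (hlast : a (n + 1) = 0)
    (hrec : ∀ j ∈ Finset.Icc 1 n, a j ≤ γ * a (j - 1) + δ * a (j + 1) + P)
    {i : ℕ} (hi : i ∈ Finset.Icc 1 n) :
    a i ≤ γ / (1 - θ) * U + max 1 ((δ / γ) ^ (((n : ℝ) - 1) / 2)) / (1 - θ) * P := by
  obtain ⟨s, hs, hsθ, hsn⟩ := exists_weight_of_gains hγ hδ n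
  rw [← hθdef] at hsθ
  have hθ1 : 0 < 1 - θ := by linarith
  calc a i ≤ (γ * U + s ^ (n - 1) * P) / (1 - θ) := hsθ ▸
        discrete_max_principle_weighted hs hU hP hγ.le hδ (hsθ ▸ hθ) ha ha0 hlast hrec hi
    _ ≤ (γ * U + max 1 ((δ / γ) ^ (((n : ℝ) - 1) / 2)) * P) / (1 - θ) := by gcongr
    _ = _ := by ring

end StringRecurrence

theorem one_sided_string_stability {k m : ℕ}
    (D : Set (EuclideanSpace ℝ (Fin k))) (hD0 : (0 : EuclideanSpace ℝ (Fin k)) ∈ D)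
    (h : EuclideanSpace ℝ (Fin k) → EuclideanSpace ℝ (Fin m))
    (hh0 : h 0 = 0)
    (f : EuclideanSpace ℝ (Fin k) → EuclideanSpace ℝ (Fin k) → EuclideanSpace ℝ (Fin k) →
      EuclideanSpace ℝ (Fin k))
    (p : ℝ) (hp : 1 ≤ p)
    (Q : EuclideanSpace ℝ (Fin k) → ℝ) (hQ0 : ∀ ξ ∈ D, 0 ≤ Q ξ)
    (γ δ : ℝ) (hγ : 0 < γ) (hδ : 0 ≤ δ)
    (θ : ℝ) (hθdef : θ = if δ < γ then γ + δ else 2 * Real.sqrt (γ * δ)) (hθ : θ < 1)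
    -- the single-component trajectory estimate (3.2)
    (Hcomp : ∀ ξ ∈ D, ∀ u w : ℝ → EuclideanSpace ℝ (Fin k),
      ContinuousOn u (Set.Ici 0) → ContinuousOn w (Set.Ici 0) →
      (∀ t ≥ (0:ℝ), u t ∈ D) → (∀ t ≥ (0:ℝ), w t ∈ D) →
      ∀ x : ℝ → EuclideanSpace ℝ (Fin k),
        (∀ t ≥ (0:ℝ), x t ∈ D) → x 0 = ξ →
        (∀ t ≥ (0:ℝ), HasDerivAt x (f (u t) (x t) (w t)) t) →
        ∀ t ≥ (0:ℝ),
          lpNorm p (fun s => h (x s)) t ≤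
            γ * lpNorm p (fun s => h (u s)) t + δ * lpNorm p (fun s => h (w s)) t + Q ξ) :
    -- conclusion: the one-sided string estimate with the explicit gains of Theorem 3
    ∀ (n : ℕ) (hn : 1 ≤ n), ∀ u : ℝ → EuclideanSpace ℝ (Fin k),
      ContinuousOn u (Set.Ici 0) → (∀ t ≥ (0:ℝ), u t ∈ D) →
      ∀ ξ : ℕ → EuclideanSpace ℝ (Fin k), (∀ i, 1 ≤ i → i ≤ n → ξ i ∈ D) →
      ∀ x : ℕ → ℝ → EuclideanSpace ℝ (Fin k),
        (∀ t, x 0 t = u t) → (∀ t, x (n + 1) t = 0) →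
        (∀ i, 1 ≤ i → i ≤ n →
          (∀ t ≥ (0:ℝ), x i t ∈ D) ∧ x i 0 = ξ i ∧
          (∀ t ≥ (0:ℝ), HasDerivAt (x i) (f (x (i - 1) t) (x i t) (x (i + 1) t)) t)) →
        ∀ i, 1 ≤ i → i ≤ n → ∀ t ≥ (0:ℝ),
          lpNorm p (fun s => h (x i s)) t ≤
            (γ / (1 - θ)) * lpNorm p (fun s => h (u s)) t +
            (max 1 ((δ / γ) ^ (((n : ℝ) - 1) / 2)) / (1 - θ)) *
              ((Finset.Icc 1 n).sup' (Finset.nonempty_Icc.mpr hn) fun j => Q (ξ j)) := by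
  intro n hn u hu huD ξ hξD x hx0 hxlast hx i hi1 hin t ht
  set Qmax := (Finset.Icc 1 n).sup' (Finset.nonempty_Icc.mpr hn) fun j => Q (ξ j)
  have hQmax : ∀ j ∈ Finset.Icc 1 n, Q (ξ j) ≤ Qmax := fun j hj =>
    Finset.le_sup' (fun j => Q (ξ j)) hj
  have hinput : ∀ j ≤ n + 1, ContinuousOn (x j) (Set.Ici 0) ∧ ∀ s ≥ (0:ℝ), x j s ∈ D := by
    intro j hj
    rcases Nat.eq_zero_or_pos j with rfl | hj0
    · rw [funext hx0]; exact ⟨hu, huD⟩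
    rcases hj.eq_or_lt with rfl | hjn
    · rw [funext hxlast]; exact ⟨continuousOn_const, fun _ _ => hD0⟩
    obtain ⟨hxD, -, hxd⟩ := hx j hj0 (by omega)
    exact ⟨fun s hs => (hxd s hs).continuousAt.continuousWithinAt, hxD⟩
  refine StringRecurrence.le_of_string_recurrence (a := fun j => lpNorm p (fun s => h (x j s)) t)
    hγ hδ hθdef hθ (lpNorm_nonneg ht) ((hQ0 _ (hξD 1 le_rfl hn)).trans (hQmax 1 (by simp [hn])))
    (fun j => lpNorm_nonneg ht) (by simp only [hx0, le_refl])
    (by simp only [hxlast, hh0]; exact lpNorm_zero (by positivity) t) ?_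
    (Finset.mem_Icc.mpr ⟨hi1, hin⟩)
  intro j hj
  obtain ⟨hj1, hjn⟩ := Finset.mem_Icc.mp hj
  obtain ⟨hxD, hxξ, hxd⟩ := hx j hj1 hjn
  obtain ⟨hprev_cont, hprev_mem⟩ := hinput (j - 1) (by omega)
  obtain ⟨hnext_cont, hnext_mem⟩ := hinput (j + 1) (by omega)
  have hj_est := Hcomp (ξ j) (hξD j hj1 hjn) _ _ hprev_cont hnext_cont hprev_mem hnext_mem
    (x j) hxD hxξ hxd t ht
  linarith [hQmax j hj]
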